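/- arXiv:2001.05360 — 4 statements merged into one kernel-verified Lean document; each statement's English description precedes it below -/
import Mathlib

section
/- Let (a, b) be a pair of Δ_C-valued random vectors with E[a | b] = (M^0)'b almost surely, where M^0 is a row-stochastic C×C matrix with all entries strictly positive. Let U ⊂ ℝ^{C×(C−1)} be the open set of matrices M̃ whose completion M (with M_{iC} = 1 − Σ_{j<C} M_{ij}) has all entries strictly positive, and define ℓ_L : U → ℝ by ℓ_L(M̃) = E[D_KL(a ‖ M'b)]. Then ℓ_L is Fréchet differentiable at M̃^0 (the completion-free part of M^0) with derivative equal to zero. -/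
open MeasureTheory ProbabilityTheory Filter Finset
open scoped ENNReal NNReal BigOperators

noncomputable section

namespace GBQL

/-- The probability simplex Δ_C in ℝ^C. -/
def simplex (C : ℕ) : Set (Fin C → ℝ) :=
  {x | (∀ i, 0 ≤ x i) ∧ ∑ i, x i = 1}

/-- A C×C matrix (as a function) is row-stochastic. -/
def rowStochastic {C : ℕ} (M : Fin C → Fin C → ℝ) : Prop :=
  (∀ i j, 0 ≤ M i j) ∧ ∀ i, ∑ j, M i j = 1

/-- M' x, the transpose of M applied to x : (M'x)_j = Σ_i M_{ij} x_i. -/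
def mtv {C : ℕ} (M : Fin C → Fin C → ℝ) (x : Fin C → ℝ) : Fin C → ℝ :=
  fun j => ∑ i, M i j * x i

open scoped Classical in
/-- Kullback–Leibler divergence D_KL(p‖q) = Σ_j p_j log(p_j/q_j) as an element of [0,∞],
with conventions 0·log(0/x) = 0 and p_j log(p_j/0) = ∞ for p_j > 0. -/
def klDiv {C : ℕ} (p q : Fin C → ℝ) : ℝ≥0∞ :=
  if ∃ j, 0 < p j ∧ q j = 0 then ⊤
  else ENNReal.ofReal (∑ j, if p j = 0 then 0 else p j * Real.log (p j / q j))

/-- Real-valued Kullback–Leibler divergence (agreeing with `klDiv` whenever `q` has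
strictly positive entries). -/
def klReal {C : ℕ} (p q : Fin C → ℝ) : ℝ :=
  ∑ j, if p j = 0 then 0 else p j * Real.log (p j / q j)

/-- Completion of a C×(C−1) matrix M̃ to a C×C matrix M with M_{iC} = 1 − Σ_{j<C} M_{ij}. -/
def completeM {c : ℕ} (Mt : Fin (c+1) → Fin c → ℝ) : Fin (c+1) → Fin (c+1) → ℝ :=
  fun i j => if h : (j : ℕ) < c then Mt i ⟨j, h⟩ else 1 - ∑ k, Mt i k

/-- Completion of p̃ ∈ ℝ^{C−1} to p ∈ ℝ^C with p_C = 1 − Σ_{i<C} p_i. -/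
def completeV {c : ℕ} (pt : Fin c → ℝ) : Fin (c+1) → ℝ :=
  fun i => if h : (i : ℕ) < c then pt ⟨i, h⟩ else 1 - ∑ k, pt k

/-- The first C−1 columns of a C×C matrix. -/
def truncM {c : ℕ} (M : Fin (c+1) → Fin (c+1) → ℝ) : Fin (c+1) → Fin c → ℝ :=
  fun i j => M i (Fin.castSucc j)

/-- The first C−1 coordinates of a vector in ℝ^C. -/
def truncV {c : ℕ} (p : Fin (c+1) → ℝ) : Fin c → ℝ := fun i => p (Fin.castSucc i)

/-- The parameter space: θ = (M̃, p̃). -/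
abbrev Param (c : ℕ) := (Fin (c+1) → Fin c → ℝ) × (Fin c → ℝ)

/-- S_d = {x ∈ ℝ^d : x_i ≥ 0, Σ_i x_i ≤ 1}. -/
def Sset (d : ℕ) : Set (Fin d → ℝ) := {x | (∀ i, 0 ≤ x i) ∧ ∑ i, x i ≤ 1}

/-- Θ = (S_{C−1})^C × S_{C−1}. -/
def Theta (c : ℕ) : Set (Param c) := {θ | (∀ i, θ.1 i ∈ Sset c) ∧ θ.2 ∈ Sset c}

/-- ℓ1 distance on the concatenated coordinates of θ. -/
def l1dist {c : ℕ} (θ θ' : Param c) : ℝ :=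
  (∑ i, ∑ j, |θ.1 i j - θ'.1 i j|) + ∑ i, |θ.2 i - θ'.2 i|

/-- The empirical loss f_N(θ), valued in [0,∞]. -/
def fN {c : ℕ} (N n : ℕ) (aU aL bL : ℕ → Fin (c+1) → ℝ) (θ : Param c) : ℝ≥0∞ :=
  ((∑ r ∈ Finset.range N, klDiv (aU r) (mtv (completeM θ.1) (completeV θ.2))) +
    ∑ r ∈ Finset.range n, klDiv (aL r) (mtv (completeM θ.1) (bL r))) / (N : ℝ≥0∞)

/-- The empirical loss f_N(θ), real-valued version (valid near interior points). -/
def fNreal {c : ℕ} (N n : ℕ) (aU aL bL : ℕ → Fin (c+1) → ℝ) (θ : Param c) : ℝ :=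
  ((∑ r ∈ Finset.range N, klReal (aU r) (mtv (completeM θ.1) (completeV θ.2))) +
    ∑ r ∈ Finset.range n, klReal (aL r) (mtv (completeM θ.1) (bL r))) / (N : ℝ)

/-- exp(−x) for x ∈ [0,∞], with exp(−∞) = 0. -/
def expNeg (x : ℝ≥0∞) : ℝ≥0∞ :=
  if x = ⊤ then 0 else ENNReal.ofReal (Real.exp (-x.toReal))

/-- The extended logarithm [0,∞] → [−∞,∞]. -/
def elog (x : ℝ≥0∞) : EReal :=
  if x = 0 then ⊥ else if x = ⊤ then ⊤ else ((Real.log x.toReal : ℝ) : EReal)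

/-- Index set for the coordinates of θ = (M̃, p̃): pairs (i,j) for M̃ entries and i for p̃. -/
abbrev Idx (c : ℕ) := (Fin (c+1) × Fin c) ⊕ Fin c

/-- Coordinates of θ as a vector indexed by `Idx c`. -/
def vecParam {c : ℕ} (θ : Param c) : Idx c → ℝ :=
  Sum.elim (fun ij => θ.1 ij.1 ij.2) (fun i => θ.2 i)

/-- Standard basis vectors of the parameter space, indexed by `Idx c`. -/
def basisP (c : ℕ) : Idx c → Param c :=
  Sum.elim (fun ij => (fun i j => if i = ij.1 ∧ j = ij.2 then 1 else 0, 0))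
    (fun i0 => (0, fun i => if i = i0 then 1 else 0))


section AuxLemmas

lemma klReal_eq {n : ℕ} (p q : Fin n → ℝ) :
    klReal p q = ∑ j, p j * Real.log (p j / q j) := by
  unfold klReal
  refine Finset.sum_congr rfl fun j _ => ?_
  split_ifs with h
  · simp [h]
  · rfl

lemma klReal_sub {n : ℕ} (p q q0 : Fin n → ℝ) (hq : ∀ j, 0 < q j) (hq0 : ∀ j, 0 < q0 j) :
    klReal p q - klReal p q0 = ∑ j, p j * Real.log (q0 j / q j) := by
  rw [klReal_eq, klReal_eq, ← Finset.sum_sub_distrib]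
  refine Finset.sum_congr rfl fun j _ => ?_
  rcases eq_or_ne (p j) 0 with h | h
  · simp [h]
  · rw [← mul_sub]
    congr 1
    rw [Real.log_div h (hq j).ne', Real.log_div h (hq0 j).ne',
      Real.log_div (hq0 j).ne' (hq j).ne']
    ring

lemma kl_nonneg {n : ℕ} (p q : Fin n → ℝ) (hp : ∀ j, 0 ≤ p j) (hq : ∀ j, 0 < q j)
    (hsum : ∑ j, p j = ∑ j, q j) : 0 ≤ ∑ j, p j * Real.log (p j / q j) := by
  have key : ∀ j ∈ Finset.univ, p j - q j ≤ p j * Real.log (p j / q j) := by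
    intro j _
    rcases eq_or_lt_of_le (hp j) with h | h
    · rw [← h]
      simpa using (hq j).le
    · have hqp : 0 < q j / p j := div_pos (hq j) h
      have := Real.log_le_sub_one_of_pos hqp
      have hlog : Real.log (p j / q j) = - Real.log (q j / p j) := by
        rw [← Real.log_inv, inv_div]
      nlinarith [this, h, (hq j), mul_pos h (hq j), div_mul_cancel₀ (q j) h.ne']
  have := Finset.sum_le_sum key
  rw [Finset.sum_sub_distrib, hsum, sub_self] at this
  exact this

lemma kl_le_chisq {n : ℕ} (p q : Fin n → ℝ) (hp : ∀ j, 0 ≤ p j) (hq : ∀ j, 0 < q j)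
    (hsum : ∑ j, p j = ∑ j, q j) :
    ∑ j, p j * Real.log (p j / q j) ≤ ∑ j, (p j - q j)^2 / q j := by
  have key : ∀ j ∈ Finset.univ,
      p j * Real.log (p j / q j) ≤ (p j - q j)^2 / q j + (p j - q j) := by
    intro j _
    rcases eq_or_lt_of_le (hp j) with h | h
    · rw [← h, zero_mul]
      have hz : ((0:ℝ) - q j)^2 / q j = q j := by
        rw [zero_sub, neg_sq, sq, mul_div_assoc, div_self (hq j).ne', mul_one]
      rw [hz]
      linarith
    · have hpq : 0 < p j / q j := div_pos h (hq j)
      have hlog := Real.log_le_sub_one_of_pos hpq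
      have h1 : p j * Real.log (p j / q j) ≤ p j * (p j / q j - 1) :=
        mul_le_mul_of_nonneg_left hlog (hp j)
      have h2 : p j * (p j / q j - 1) = (p j - q j)^2 / q j + (p j - q j) := by
        field_simp [(hq j).ne']
        ring
      linarith
  have := Finset.sum_le_sum key
  rw [Finset.sum_add_distrib, Finset.sum_sub_distrib, hsum, sub_self, add_zero] at this
  exact this

lemma abs_log_le {x lo : ℝ} (hlo : 0 < lo) (h1 : lo ≤ x) (h2 : x ≤ 2) :
    |Real.log x| ≤ |Real.log lo| + Real.log 2 := by
  have hx : 0 < x := lt_of_lt_of_le hlo h1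
  have hl2 : (0:ℝ) ≤ Real.log 2 := Real.log_nonneg one_le_two
  have hup : Real.log x ≤ Real.log 2 := Real.log_le_log hx h2
  have hdown : Real.log lo ≤ Real.log x := Real.log_le_log hlo h1
  rw [abs_le]
  constructor
  · linarith [neg_abs_le (Real.log lo)]
  · linarith [le_abs_self (Real.log lo), abs_nonneg (Real.log lo)]

lemma term_bound {p q lo : ℝ} (hlo : 0 < lo) (hp0 : 0 ≤ p) (hp1 : p ≤ 1)
    (hq1 : lo ≤ q) (hq2 : q ≤ 2) :
    |if p = 0 then 0 else p * Real.log (p / q)| ≤ 1 + (|Real.log lo| + Real.log 2) := by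
  have hL : |Real.log q| ≤ |Real.log lo| + Real.log 2 := abs_log_le hlo hq1 hq2
  split_ifs with h
  · simp only [abs_zero]
    positivity
  · have hp : 0 < p := lt_of_le_of_ne hp0 (Ne.symm h)
    have hq : 0 < q := lt_of_lt_of_le hlo hq1
    have hsplit : p * Real.log (p / q) = p * Real.log p - p * Real.log q := by
      rw [Real.log_div hp.ne' hq.ne']; ring
    rw [hsplit]
    have h1 : |p * Real.log p| ≤ 1 := by
      have := Real.abs_log_mul_self_lt p hp hp1
      rw [abs_mul] at this ⊢
      rw [mul_comm]
      exact this.le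
    have h2 : |p * Real.log q| ≤ |Real.log lo| + Real.log 2 := by
      rw [abs_mul, abs_of_nonneg hp0]
      calc p * |Real.log q| ≤ 1 * |Real.log q| :=
            mul_le_mul_of_nonneg_right hp1 (abs_nonneg _)
        _ = |Real.log q| := one_mul _
        _ ≤ _ := hL
    calc |p * Real.log p - p * Real.log q| ≤ |p * Real.log p| + |p * Real.log q| :=
          abs_sub _ _
      _ ≤ _ := by linarith

lemma completeM_rowsum {c : ℕ} (Mt : Fin (c+1) → Fin c → ℝ) (i : Fin (c+1)) :
    ∑ j, completeM Mt i j = 1 := by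
  rw [Fin.sum_univ_castSucc]
  have h1 : ∀ j : Fin c, completeM Mt i (Fin.castSucc j) = Mt i j := by
    intro j
    simp only [completeM]
    rw [dif_pos (show ((Fin.castSucc j : Fin (c+1)) : ℕ) < c from j.isLt)]
    exact congrArg (Mt i) (Fin.ext (by simp))
  have h2 : completeM Mt i (Fin.last c) = 1 - ∑ k, Mt i k := by
    simp only [completeM]
    rw [dif_neg (by simp)]
  rw [h2, Finset.sum_congr rfl (fun j _ => h1 j)]
  ring

lemma completeM_truncM {c : ℕ} (M : Fin (c+1) → Fin (c+1) → ℝ)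
    (hrow : ∀ i, ∑ j, M i j = 1) : completeM (truncM M) = M := by
  funext i j
  simp only [completeM, truncM]
  split_ifs with h
  · exact congrArg (M i) (Fin.ext rfl)
  · have hj : j = Fin.last c := by
      apply Fin.ext
      have := j.isLt
      simp only [Fin.val_last]
      omega
    subst hj
    have hs := hrow i
    rw [Fin.sum_univ_castSucc] at hs
    linarith

lemma mtv_lower {c : ℕ} (M : Fin (c+1) → Fin (c+1) → ℝ) (x : Fin (c+1) → ℝ)
    (hx : x ∈ simplex (c+1)) (lo : ℝ) (hM : ∀ i j, lo ≤ M i j) (j : Fin (c+1)) :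
    lo ≤ mtv M x j := by
  have : lo = ∑ i, lo * x i := by
    rw [← Finset.mul_sum, hx.2, mul_one]
  rw [this]
  exact Finset.sum_le_sum fun i _ => mul_le_mul_of_nonneg_right (hM i j) (hx.1 i)

lemma mtv_upper {c : ℕ} (M : Fin (c+1) → Fin (c+1) → ℝ) (x : Fin (c+1) → ℝ)
    (hx : x ∈ simplex (c+1)) (hi : ℝ) (hM : ∀ i j, M i j ≤ hi) (j : Fin (c+1)) :
    mtv M x j ≤ hi := by
  have h2 : (∑ i, M i j * x i) ≤ ∑ i, hi * x i :=
    Finset.sum_le_sum fun i _ => mul_le_mul_of_nonneg_right (hM i j) (hx.1 i)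
  have h3 : ∑ i, hi * x i = hi := by rw [← Finset.mul_sum, hx.2, mul_one]
  calc mtv M x j = ∑ i, M i j * x i := rfl
    _ ≤ hi := h3 ▸ h2

lemma mtv_sum {c : ℕ} (M : Fin (c+1) → Fin (c+1) → ℝ) (x : Fin (c+1) → ℝ)
    (hx : x ∈ simplex (c+1)) (hrow : ∀ i, ∑ j, M i j = 1) :
    ∑ j, mtv M x j = 1 := by
  unfold mtv
  rw [Finset.sum_comm]
  have : ∀ i ∈ Finset.univ, ∑ j, M i j * x i = x i := by
    intro i _
    rw [← Finset.sum_mul, hrow i, one_mul]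
  rw [Finset.sum_congr rfl this, hx.2]

lemma mtv_diff {c : ℕ} (M M0 : Fin (c+1) → Fin (c+1) → ℝ) (x : Fin (c+1) → ℝ)
    (hx : x ∈ simplex (c+1)) (r : ℝ) (hd : ∀ i j, |M i j - M0 i j| ≤ r) (j : Fin (c+1)) :
    |mtv M x j - mtv M0 x j| ≤ r := by
  have h1 : mtv M x j - mtv M0 x j = ∑ i, (M i j - M0 i j) * x i := by
    unfold mtv
    rw [← Finset.sum_sub_distrib]
    exact Finset.sum_congr rfl fun i _ => by ring
  rw [h1]
  calc |∑ i, (M i j - M0 i j) * x i| ≤ ∑ i, |(M i j - M0 i j) * x i| :=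
        Finset.abs_sum_le_sum_abs _ _
    _ ≤ ∑ i, r * x i := by
        refine Finset.sum_le_sum fun i _ => ?_
        rw [abs_mul, abs_of_nonneg (hx.1 i)]
        exact mul_le_mul_of_nonneg_right (hd i j) (hx.1 i)
    _ = r := by rw [← Finset.mul_sum, hx.2, mul_one]

lemma measurable_klReal_comp {c : ℕ} {Ωs : Type*} [MeasurableSpace Ωs]
    (a b : Ωs → Fin (c+1) → ℝ) (ha : Measurable a) (hb : Measurable b)
    (M : Fin (c+1) → Fin (c+1) → ℝ) :
    Measurable fun ω => klReal (a ω) (mtv M (b ω)) := by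
  simp only [klReal_eq]
  apply Finset.measurable_sum
  intro j _
  have haj : Measurable fun ω => a ω j := (measurable_pi_apply j).comp ha
  have hq : Measurable fun ω => mtv M (b ω) j := by
    unfold mtv
    exact Finset.measurable_sum _ fun i _ => ((measurable_pi_apply i).comp hb).const_mul _
  exact haj.mul ((haj.div hq).log)

lemma integrable_of_bound {Ωs : Type*} [MeasurableSpace Ωs] (μ : Measure Ωs)
    [IsFiniteMeasure μ] (f : Ωs → ℝ) (hf : Measurable f) (C : ℝ) (hC : ∀ ω, |f ω| ≤ C) :
    Integrable f μ :=
  Integrable.mono' (integrable_const C) hf.aestronglyMeasurable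
    (ae_of_all _ fun ω => by rw [Real.norm_eq_abs]; exact hC ω)

lemma cond_transfer {Ωs : Type*} [MeasurableSpace Ωs] (μ : Measure Ωs)
    [IsProbabilityMeasure μ] {E : Type*} [MeasurableSpace E] (b : Ωs → E) (hb : Measurable b)
    (f : Ωs → ℝ) (hf : Measurable f) (Cf : ℝ) (hfB : ∀ ω, |f ω| ≤ Cf)
    (g k : E → ℝ) (hg : Measurable g) (Cg : ℝ) (hgB : ∀ ω, |g (b ω)| ≤ Cg)
    (hcond : μ[f | MeasurableSpace.comap b inferInstance] =ᵐ[μ] fun ω => k (b ω)) :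
    ∫ ω, f ω * g (b ω) ∂μ = ∫ ω, k (b ω) * g (b ω) ∂μ := by
  have hm : MeasurableSpace.comap b inferInstance ≤ ‹MeasurableSpace Ωs› := hb.comap_le
  haveI : SigmaFinite (μ.trim hm) := by
    have : IsFiniteMeasure (μ.trim hm) := isFiniteMeasure_trim hm
    infer_instance
  have hbm : @Measurable Ωs E (MeasurableSpace.comap b inferInstance) _ b :=
    fun s hs => ⟨s, hs, rfl⟩
  have hgm2 : @Measurable Ωs ℝ (MeasurableSpace.comap b inferInstance) _ fun ω => g (b ω) :=
    fun s hs => hbm (hg hs)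
  have hgm : StronglyMeasurable[MeasurableSpace.comap b inferInstance] fun ω => g (b ω) :=
    hgm2.stronglyMeasurable
  have hfi : Integrable f μ := integrable_of_bound μ f hf Cf hfB
  have hfgi : Integrable ((fun ω => g (b ω)) * f) μ := by
    refine integrable_of_bound μ _ ((hg.comp hb).mul hf) (Cg * Cf) fun ω => ?_
    simp only [Pi.mul_apply]
    rw [abs_mul]
    have h0 : (0:ℝ) ≤ Cg := le_trans (abs_nonneg _) (hgB ω)
    exact mul_le_mul (hgB ω) (hfB ω) (abs_nonneg _) h0
  have h1 := condExp_mul_of_stronglyMeasurable_left hgm hfgi hfi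
  calc ∫ ω, f ω * g (b ω) ∂μ = ∫ ω, ((fun ω => g (b ω)) * f) ω ∂μ := by
        simp only [Pi.mul_apply, mul_comm]
    _ = ∫ ω, (μ[(fun ω => g (b ω)) * f | MeasurableSpace.comap b inferInstance]) ω ∂μ :=
        (integral_condExp hm).symm
    _ = ∫ ω, ((fun ω => g (b ω)) * μ[f | MeasurableSpace.comap b inferInstance]) ω ∂μ :=
        integral_congr_ae h1
    _ = ∫ ω, k (b ω) * g (b ω) ∂μ := by
        refine integral_congr_ae (hcond.mono fun ω hω => ?_)
        simp only [Pi.mul_apply]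
        rw [hω, mul_comm]

lemma key_estimate {Ωs : Type*} [MeasurableSpace Ωs] (μ : Measure Ωs) [IsProbabilityMeasure μ]
    (c : ℕ) (a b : Ωs → Fin (c+1) → ℝ) (ha_meas : Measurable a) (hb_meas : Measurable b)
    (ha_simplex : ∀ ω, a ω ∈ simplex (c+1)) (hb_simplex : ∀ ω, b ω ∈ simplex (c+1))
    (M0 M : Fin (c+1) → Fin (c+1) → ℝ)
    (hrow0 : ∀ i, ∑ j, M0 i j = 1) (hrow : ∀ i, ∑ j, M i j = 1)
    (lo r : ℝ) (hlo : 0 < lo) (hr : 0 ≤ r)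
    (hM0lo : ∀ i j, lo ≤ M0 i j) (hM0hi : ∀ i j, M0 i j ≤ 2)
    (hMlo : ∀ i j, lo ≤ M i j) (hMhi : ∀ i j, M i j ≤ 2)
    (hdiff : ∀ i j, |M i j - M0 i j| ≤ r)
    (hcond : ∀ j, μ[(fun ω => a ω j) | MeasurableSpace.comap b inferInstance]
      =ᵐ[μ] fun ω => mtv M0 (b ω) j) :
    |∫ ω, klReal (a ω) (mtv M (b ω)) ∂μ - ∫ ω, klReal (a ω) (mtv M0 (b ω)) ∂μ|
      ≤ ((c:ℝ)+1) * (r^2 / lo) := by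
  have ha0 : ∀ ω j, 0 ≤ a ω j := fun ω => (ha_simplex ω).1
  have ha1 : ∀ ω j, a ω j ≤ 1 := by
    intro ω j
    calc a ω j ≤ ∑ i, a ω i :=
          Finset.single_le_sum (fun i _ => ha0 ω i) (Finset.mem_univ j)
      _ = 1 := (ha_simplex ω).2
  have hqlo : ∀ ω j, lo ≤ mtv M (b ω) j := fun ω j =>
    mtv_lower M (b ω) (hb_simplex ω) lo hMlo j
  have hqhi : ∀ ω j, mtv M (b ω) j ≤ 2 := fun ω j =>
    mtv_upper M (b ω) (hb_simplex ω) 2 hMhi j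
  have hq0lo : ∀ ω j, lo ≤ mtv M0 (b ω) j := fun ω j =>
    mtv_lower M0 (b ω) (hb_simplex ω) lo hM0lo j
  have hq0hi : ∀ ω j, mtv M0 (b ω) j ≤ 2 := fun ω j =>
    mtv_upper M0 (b ω) (hb_simplex ω) 2 hM0hi j
  have hqpos : ∀ ω j, 0 < mtv M (b ω) j := fun ω j => lt_of_lt_of_le hlo (hqlo ω j)
  have hq0pos : ∀ ω j, 0 < mtv M0 (b ω) j := fun ω j => lt_of_lt_of_le hlo (hq0lo ω j)
  set T : ℝ := 1 + (|Real.log lo| + Real.log 2) with hT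
  have hklbound : ∀ (M' : Fin (c+1) → Fin (c+1) → ℝ),
      (∀ ω j, lo ≤ mtv M' (b ω) j) → (∀ ω j, mtv M' (b ω) j ≤ 2) →
      ∀ ω, |klReal (a ω) (mtv M' (b ω))| ≤ ((c:ℝ)+1) * T := by
    intro M' hlo' hhi' ω
    unfold klReal
    calc |∑ j, if a ω j = 0 then 0 else a ω j * Real.log (a ω j / mtv M' (b ω) j)|
        ≤ ∑ j, |if a ω j = 0 then 0 else a ω j * Real.log (a ω j / mtv M' (b ω) j)| :=
          Finset.abs_sum_le_sum_abs _ _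
      _ ≤ ∑ _j : Fin (c+1), T := Finset.sum_le_sum fun j _ =>
          term_bound hlo (ha0 ω j) (ha1 ω j) (hlo' ω j) (hhi' ω j)
      _ = ((c:ℝ)+1) * T := by
          rw [Finset.sum_const, Finset.card_univ, Fintype.card_fin, nsmul_eq_mul]
          push_cast
          ring
  have hint1 : Integrable (fun ω => klReal (a ω) (mtv M (b ω))) μ :=
    integrable_of_bound μ _ (measurable_klReal_comp a b ha_meas hb_meas M)
      (((c:ℝ)+1) * T) (hklbound M hqlo hqhi)
  have hint0 : Integrable (fun ω => klReal (a ω) (mtv M0 (b ω))) μ :=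
    integrable_of_bound μ _ (measurable_klReal_comp a b ha_meas hb_meas M0)
      (((c:ℝ)+1) * T) (hklbound M0 hq0lo hq0hi)
  have hLg : ∀ ω (j : Fin (c+1)),
      |Real.log (mtv M0 (b ω) j / mtv M (b ω) j)| ≤ 2 * (|Real.log lo| + Real.log 2) := by
    intro ω j
    rw [Real.log_div (hq0pos ω j).ne' (hqpos ω j).ne']
    calc |Real.log (mtv M0 (b ω) j) - Real.log (mtv M (b ω) j)|
        ≤ |Real.log (mtv M0 (b ω) j)| + |Real.log (mtv M (b ω) j)| := abs_sub _ _
      _ ≤ 2 * (|Real.log lo| + Real.log 2) := by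
          have := abs_log_le hlo (hq0lo ω j) (hq0hi ω j)
          have := abs_log_le hlo (hqlo ω j) (hqhi ω j)
          linarith
  have hqmeas : ∀ (M' : Fin (c+1) → Fin (c+1) → ℝ) (j : Fin (c+1)),
      Measurable fun x : Fin (c+1) → ℝ => mtv M' x j := by
    intro M' j
    unfold mtv
    exact Finset.measurable_sum _ fun i _ => (measurable_pi_apply i).const_mul _
  have hgmeas : ∀ j : Fin (c+1),
      Measurable fun x : Fin (c+1) → ℝ => Real.log (mtv M0 x j / mtv M x j) := by
    intro j
    exact ((hqmeas M0 j).div (hqmeas M j)).log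
  -- Step 2: rewrite the difference of integrals
  have step2 : ∫ ω, klReal (a ω) (mtv M (b ω)) ∂μ - ∫ ω, klReal (a ω) (mtv M0 (b ω)) ∂μ
      = ∫ ω, ∑ j, mtv M0 (b ω) j * Real.log (mtv M0 (b ω) j / mtv M (b ω) j) ∂μ := by
    rw [← integral_sub hint1 hint0]
    have e1 : ∀ ω, klReal (a ω) (mtv M (b ω)) - klReal (a ω) (mtv M0 (b ω))
        = ∑ j, a ω j * Real.log (mtv M0 (b ω) j / mtv M (b ω) j) := fun ω =>
      klReal_sub (a ω) _ _ (hqpos ω) (hq0pos ω)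
    rw [integral_congr_ae (ae_of_all _ e1)]
    have intj : ∀ j : Fin (c+1), Integrable
        (fun ω => a ω j * Real.log (mtv M0 (b ω) j / mtv M (b ω) j)) μ := by
      intro j
      refine integrable_of_bound μ _ ?_ (2 * (|Real.log lo| + Real.log 2)) fun ω => ?_
      · exact ((measurable_pi_apply j).comp ha_meas).mul ((hgmeas j).comp hb_meas)
      · rw [abs_mul]
        calc |a ω j| * |Real.log (mtv M0 (b ω) j / mtv M (b ω) j)|
            ≤ 1 * (2 * (|Real.log lo| + Real.log 2)) := by
              apply mul_le_mul
              · rw [abs_of_nonneg (ha0 ω j)]; exact ha1 ω j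
              · exact hLg ω j
              · exact abs_nonneg _
              · exact zero_le_one
          _ = _ := one_mul _
    have intj' : ∀ j : Fin (c+1), Integrable
        (fun ω => mtv M0 (b ω) j * Real.log (mtv M0 (b ω) j / mtv M (b ω) j)) μ := by
      intro j
      refine integrable_of_bound μ _ ?_ (2 * (2 * (|Real.log lo| + Real.log 2))) fun ω => ?_
      · exact ((hqmeas M0 j).comp hb_meas).mul ((hgmeas j).comp hb_meas)
      · rw [abs_mul]
        have h2 : |mtv M0 (b ω) j| ≤ 2 := by
          rw [abs_of_nonneg (hq0pos ω j).le]; exact hq0hi ω j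
        exact mul_le_mul h2 (hLg ω j) (abs_nonneg _) (by norm_num)
    rw [integral_finset_sum _ (fun j _ => intj j), integral_finset_sum _ (fun j _ => intj' j)]
    refine Finset.sum_congr rfl fun j _ => ?_
    exact cond_transfer μ b hb_meas (fun ω => a ω j)
      ((measurable_pi_apply j).comp ha_meas) 1
      (fun ω => by rw [abs_of_nonneg (ha0 ω j)]; exact ha1 ω j)
      (fun x => Real.log (mtv M0 x j / mtv M x j)) (fun x => mtv M0 x j)
      (hgmeas j) (2 * (|Real.log lo| + Real.log 2)) (fun ω => hLg ω j) (hcond j)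
  rw [step2]
  -- Step 3: pointwise bounds on the inner KL divergence
  have hF0 : ∀ ω, 0 ≤ ∑ j, mtv M0 (b ω) j * Real.log (mtv M0 (b ω) j / mtv M (b ω) j) := by
    intro ω
    refine kl_nonneg _ _ (fun j => (hq0pos ω j).le) (hqpos ω) ?_
    rw [mtv_sum M0 (b ω) (hb_simplex ω) hrow0, mtv_sum M (b ω) (hb_simplex ω) hrow]
  have hFle : ∀ ω, ∑ j, mtv M0 (b ω) j * Real.log (mtv M0 (b ω) j / mtv M (b ω) j)
      ≤ ((c:ℝ)+1) * (r^2 / lo) := by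
    intro ω
    have h1 := kl_le_chisq (fun j => mtv M0 (b ω) j) (fun j => mtv M (b ω) j)
      (fun j => (hq0pos ω j).le) (hqpos ω)
      (by rw [mtv_sum M0 (b ω) (hb_simplex ω) hrow0, mtv_sum M (b ω) (hb_simplex ω) hrow])
    have h2 : ∑ j, (mtv M0 (b ω) j - mtv M (b ω) j)^2 / mtv M (b ω) j
        ≤ ∑ _j : Fin (c+1), r^2 / lo := by
      refine Finset.sum_le_sum fun j _ => ?_
      have hd : |mtv M0 (b ω) j - mtv M (b ω) j| ≤ r := by
        have := mtv_diff M M0 (b ω) (hb_simplex ω) r hdiff j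
        rwa [abs_sub_comm]
      have hnum : (mtv M0 (b ω) j - mtv M (b ω) j)^2 ≤ r^2 := by
        rw [← sq_abs]
        exact pow_le_pow_left₀ (abs_nonneg _) hd 2
      exact div_le_div₀ (by positivity) hnum hlo (hqlo ω j)
    have h3 : ∑ _j : Fin (c+1), r^2 / lo = ((c:ℝ)+1) * (r^2 / lo) := by
      rw [Finset.sum_const, Finset.card_univ, Fintype.card_fin, nsmul_eq_mul]
      push_cast
      ring
    linarith
  have hpos : 0 ≤ ∫ ω, ∑ j, mtv M0 (b ω) j * Real.log (mtv M0 (b ω) j / mtv M (b ω) j) ∂μ :=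
    integral_nonneg hF0
  rw [abs_of_nonneg hpos]
  calc ∫ ω, ∑ j, mtv M0 (b ω) j * Real.log (mtv M0 (b ω) j / mtv M (b ω) j) ∂μ
      ≤ ∫ _ω, ((c:ℝ)+1) * (r^2 / lo) ∂μ :=
        integral_mono_of_nonneg (ae_of_all _ hF0) (integrable_const _) (ae_of_all _ hFle)
    _ = ((c:ℝ)+1) * (r^2 / lo) := by simp

end AuxLemmas

/-- under E[a|b] = (M⁰)'b a.s. with M⁰ row-stochastic with strictly positive
entries, the labeled loss ℓ_L(M̃) = E[D_KL(a ‖ M'b)] (with M the completion of M̃) is Fréchet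
differentiable at M̃⁰ with derivative 0. -/
theorem stmt1 {Ωs : Type*} [MeasurableSpace Ωs] (μ : Measure Ωs) [IsProbabilityMeasure μ]
    (c : ℕ) (hc : 1 ≤ c)
    (a b : Ωs → Fin (c+1) → ℝ) (ha_meas : Measurable a) (hb_meas : Measurable b)
    (ha_simplex : ∀ ω, a ω ∈ simplex (c+1)) (hb_simplex : ∀ ω, b ω ∈ simplex (c+1))
    (M0 : Fin (c+1) → Fin (c+1) → ℝ) (hM0 : rowStochastic M0) (hM0pos : ∀ i j, 0 < M0 i j)
    (hcond : ∀ j, μ[(fun ω => a ω j) | MeasurableSpace.comap b inferInstance]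
      =ᵐ[μ] fun ω => mtv M0 (b ω) j) :
    HasFDerivAt
      (fun Mt : Fin (c+1) → Fin c → ℝ => ∫ ω, klReal (a ω) (mtv (completeM Mt) (b ω)) ∂μ)
      (0 : (Fin (c+1) → Fin c → ℝ) →L[ℝ] ℝ) (truncM M0)  := by
  classical
  obtain ⟨⟨i0, j0⟩, -, hmin⟩ := Finset.exists_min_image
    (Finset.univ : Finset (Fin (c+1) × Fin (c+1))) (fun p => M0 p.1 p.2)
    ⟨(0, 0), Finset.mem_univ _⟩
  set ε0 := M0 i0 j0 with hε0def
  have hε0 : 0 < ε0 := hM0pos i0 j0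
  have hε0le : ∀ i j, ε0 ≤ M0 i j := fun i j => hmin (i, j) (Finset.mem_univ _)
  have hM0hi1 : ∀ i j, M0 i j ≤ 1 := by
    intro i j
    calc M0 i j ≤ ∑ k, M0 i k :=
          Finset.single_le_sum (fun k _ => hM0.1 i k) (Finset.mem_univ j)
      _ = 1 := hM0.2 i
  have hε0le1 : ε0 ≤ 1 := le_trans (hε0le 0 0) (hM0hi1 0 0)
  have hc1 : (1:ℝ) ≤ (c:ℝ) := by exact_mod_cast hc
  rw [hasFDerivAt_iff_isLittleO_nhds_zero]
  simp only [ContinuousLinearMap.zero_apply, sub_zero]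
  rw [Asymptotics.isLittleO_iff]
  intro C hC
  set K : ℝ := ((c:ℝ)+1) * ((c:ℝ)^2 * (2/ε0)) with hKdef
  have hK : 0 < K := by positivity
  rw [Metric.eventually_nhds_iff]
  refine ⟨min (ε0/(2*(c:ℝ))) (C/K), by positivity, fun H hdist => ?_⟩
  rw [dist_zero_right] at hdist
  have hH1 : ‖H‖ ≤ ε0/(2*(c:ℝ)) := le_of_lt (lt_of_lt_of_le hdist (min_le_left _ _))
  have hH2 : ‖H‖ ≤ C/K := le_of_lt (lt_of_lt_of_le hdist (min_le_right _ _))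
  have hHnn : 0 ≤ ‖H‖ := norm_nonneg H
  have hHij : ∀ i j, |H i j| ≤ ‖H‖ := by
    intro i j
    calc |H i j| = ‖H i j‖ := (Real.norm_eq_abs _).symm
      _ ≤ ‖H i‖ := norm_le_pi_norm (H i) j
      _ ≤ ‖H‖ := norm_le_pi_norm H i
  set M : Fin (c+1) → Fin (c+1) → ℝ := completeM (truncM M0 + H) with hMdef
  have hdiff : ∀ i j, |M i j - M0 i j| ≤ (c:ℝ) * ‖H‖ := by
    intro i j
    rw [hMdef]
    simp only [completeM, Pi.add_apply]
    split_ifs with h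
    · have htr : truncM M0 i ⟨(j:ℕ), h⟩ = M0 i j := by
        simp only [truncM]
        exact congrArg (M0 i) (Fin.ext rfl)
      rw [htr, add_sub_cancel_left]
      calc |H i ⟨(j:ℕ), h⟩| ≤ ‖H‖ := hHij i _
        _ ≤ (c:ℝ) * ‖H‖ := le_mul_of_one_le_left hHnn hc1
    · have hj : j = Fin.last c := by
        apply Fin.ext
        have := j.isLt
        simp only [Fin.val_last]
        omega
      subst hj
      have hs := hM0.2 i
      rw [Fin.sum_univ_castSucc] at hs
      have hM0last : M0 i (Fin.last c) = 1 - ∑ k, truncM M0 i k := by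
        simp only [truncM]
        linarith
      have : 1 - ∑ k, (truncM M0 i k + H i k) - M0 i (Fin.last c) = -∑ k, H i k := by
        rw [Finset.sum_add_distrib, hM0last]
        ring
      rw [this, abs_neg]
      calc |∑ k, H i k| ≤ ∑ k, |H i k| := Finset.abs_sum_le_sum_abs _ _
        _ ≤ ∑ _k : Fin c, ‖H‖ := Finset.sum_le_sum fun k _ => hHij i k
        _ = (c:ℝ) * ‖H‖ := by
            rw [Finset.sum_const, Finset.card_univ, Fintype.card_fin, nsmul_eq_mul]
  have hcH : (c:ℝ) * ‖H‖ ≤ ε0/2 := by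
    have h2c : (0:ℝ) < 2*(c:ℝ) := by linarith
    calc (c:ℝ) * ‖H‖ ≤ (c:ℝ) * (ε0/(2*(c:ℝ))) :=
          mul_le_mul_of_nonneg_left hH1 (by linarith)
      _ = ε0/2 := by field_simp
  have hMlo : ∀ i j, ε0/2 ≤ M i j := by
    intro i j
    have h1 := hdiff i j
    have h2 := hε0le i j
    have := abs_le.mp h1
    linarith [this.1]
  have hMhi : ∀ i j, M i j ≤ 2 := by
    intro i j
    have h1 := hdiff i j
    have h2 := hM0hi1 i j
    have := abs_le.mp h1
    have hε01 : ε0/2 ≤ 1/2 := by linarith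
    linarith [this.2]
  have hM0lo2 : ∀ i j, ε0/2 ≤ M0 i j := fun i j => le_trans (by linarith) (hε0le i j)
  have hM0hi2 : ∀ i j, M0 i j ≤ 2 := fun i j => le_trans (hM0hi1 i j) one_le_two
  have key := key_estimate μ c a b ha_meas hb_meas ha_simplex hb_simplex M0 M
    hM0.2 (completeM_rowsum _) (ε0/2) ((c:ℝ) * ‖H‖) (by positivity)
    (by positivity) hM0lo2 hM0hi2 hMlo hMhi hdiff hcond
  have hrwM0 : completeM (truncM M0) = M0 := completeM_truncM M0 hM0.2
  rw [hrwM0]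
  rw [Real.norm_eq_abs]
  have hbound : ((c:ℝ)+1) * (((c:ℝ) * ‖H‖)^2 / (ε0/2)) = K * ‖H‖^2 := by
    rw [hKdef]
    field_simp
  have hKH : K * ‖H‖^2 ≤ C * ‖H‖ := by
    have h1 : K * ‖H‖ ≤ C := by
      have hmul := mul_le_mul_of_nonneg_left hH2 hK.le
      rw [mul_comm K (C/K), div_mul_cancel₀ C hK.ne'] at hmul
      exact hmul
    calc K * ‖H‖^2 = (K * ‖H‖) * ‖H‖ := by ring
      _ ≤ C * ‖H‖ := mul_le_mul_of_nonneg_right h1 hHnn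
  calc |∫ ω, klReal (a ω) (mtv M (b ω)) ∂μ - ∫ ω, klReal (a ω) (mtv M0 (b ω)) ∂μ|
      ≤ ((c:ℝ)+1) * (((c:ℝ) * ‖H‖)^2 / (ε0/2)) := key
    _ = K * ‖H‖^2 := hbound
    _ ≤ C * ‖H‖ := hKH


end GBQL
end
end

section
/- Let b be a random vector taking values in Δ_C such that for every i ∈ {1,…,C} and every ε > 0, P(b_i ≥ 1 − ε) > 0. Then the C×C matrix E[b b'] is symmetric positive definite. -/
open MeasureTheory ProbabilityTheory Filter Finset
open scoped ENNReal NNReal BigOperators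

noncomputable section

namespace GBQL

/-!
The quadratic form of `E[b b']` is `x ↦ E[(x ⬝ b)²]`, so the matrix is positive semidefinite,
and it fails to be definite only if `x ⬝ b = 0` almost surely for some `x ≠ 0`. On the simplex,
`x ⬝ b` lies within `2‖x‖(1 - b_i)` of `x_i`, and `b` comes arbitrarily close to every vertex `e_i`
with positive probability; hence every `x_i` vanishes.
-/

section SecondMoment

open Matrix

variable {Ω ι : Type*} [MeasurableSpace Ω] [Fintype ι]

def secondMoment (μ : Measure Ω) (b : Ω → ι → ℝ) : Matrix ι ι ℝ :=
  of fun i j => ∫ ω, b ω i * b ω j ∂μ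

variable {μ : Measure Ω} {b : Ω → ι → ℝ}

omit [Fintype ι] in
lemma isHermitian_secondMoment : (secondMoment μ b).IsHermitian := by
  ext i j
  simp only [conjTranspose_apply, secondMoment, of_apply, star_trivial, mul_comm]

lemma dotProduct_sq_eq_sum (x y : ι → ℝ) :
    (x ⬝ᵥ y) ^ 2 = ∑ i, ∑ j, x i * x j * (y i * y j) := by
  rw [dotProduct, sq, Finset.sum_mul_sum]
  exact Finset.sum_congr rfl fun i _ => Finset.sum_congr rfl fun j _ => by ring

lemma integrable_dotProduct_sq (hint : ∀ i j, Integrable (fun ω => b ω i * b ω j) μ)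
    (x : ι → ℝ) : Integrable (fun ω => (x ⬝ᵥ b ω) ^ 2) μ := by
  simp_rw [dotProduct_sq_eq_sum]
  exact integrable_finsetSum _ fun i _ => integrable_finsetSum _ fun j _ =>
    (hint i j).const_mul _

lemma dotProduct_secondMoment_mulVec
    (hint : ∀ i j, Integrable (fun ω => b ω i * b ω j) μ) (x : ι → ℝ) :
    x ⬝ᵥ (secondMoment μ b *ᵥ x) = ∫ ω, (x ⬝ᵥ b ω) ^ 2 ∂μ := by
  simp_rw [dotProduct_sq_eq_sum]
  rw [integral_finsetSum _ fun i _ => integrable_finsetSum _ fun j _ => (hint i j).const_mul _]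
  simp_rw [integral_finsetSum _ fun j (_ : j ∈ Finset.univ) => (hint _ j).const_mul _,
    integral_const_mul]
  simp only [dotProduct, mulVec, secondMoment, of_apply, Finset.mul_sum]
  exact Finset.sum_congr rfl fun i _ => Finset.sum_congr rfl fun j _ => by ring

lemma posDef_secondMoment (hint : ∀ i j, Integrable (fun ω => b ω i * b ω j) μ)
    (hspan : ∀ x : ι → ℝ, (∀ᵐ ω ∂μ, x ⬝ᵥ b ω = 0) → x = 0) :
    (secondMoment μ b).PosDef := by
  refine posDef_iff_dotProduct_mulVec.2 ⟨isHermitian_secondMoment, fun x hx => ?_⟩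
  rw [star_trivial, dotProduct_secondMoment_mulVec hint]
  refine (integral_nonneg fun ω => sq_nonneg _).lt_of_ne' fun hzero => hx (hspan x ?_)
  filter_upwards [(integral_eq_zero_iff_of_nonneg (fun ω => sq_nonneg _)
    (integrable_dotProduct_sq hint x)).1 hzero] with ω hω
  exact pow_eq_zero_iff two_ne_zero |>.1 hω

end SecondMoment

lemma abs_dotProduct_sub_le {ι : Type*} [Fintype ι] [DecidableEq ι] {b : ι → ℝ} (hb0 : 0 ≤ b)
    (hb1 : ∑ j, b j = 1) (x : ι → ℝ) (i : ι) :
    |x ⬝ᵥ b - x i| ≤ 2 * ‖x‖ * (1 - b i) := by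
  have hdiff : x ⬝ᵥ b - x i = ∑ j ∈ Finset.univ.erase i, (x j - x i) * b j := by
    rw [Finset.sum_erase _ (by simp), dotProduct]
    simp only [sub_mul, Finset.sum_sub_distrib, ← Finset.mul_sum, hb1, mul_one]
  calc |x ⬝ᵥ b - x i| ≤ ∑ j ∈ Finset.univ.erase i, |x j - x i| * b j := by
        rw [hdiff]
        refine (Finset.abs_sum_le_sum_abs _ _).trans_eq (Finset.sum_congr rfl fun j _ => ?_)
        rw [abs_mul, abs_of_nonneg (hb0 j)]
    _ ≤ ∑ j ∈ Finset.univ.erase i, 2 * ‖x‖ * b j := by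
        refine Finset.sum_le_sum fun j _ => mul_le_mul_of_nonneg_right ?_ (hb0 j)
        have := norm_le_pi_norm x j
        have := norm_le_pi_norm x i
        rw [Real.norm_eq_abs] at *
        linarith [abs_sub (x j) (x i)]
    _ = 2 * ‖x‖ * (1 - b i) := by
        rw [← Finset.mul_sum, Finset.sum_erase_eq_sub (Finset.mem_univ i), hb1]

lemma le_one_of_mem_simplex {C : ℕ} {x : Fin C → ℝ} (hx : x ∈ simplex C) (i : Fin C) :
    x i ≤ 1 :=
  hx.2 ▸ Finset.single_le_sum (fun j _ => hx.1 j) (Finset.mem_univ i)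

section RandomSimplexVector

open Topology

variable {Ω : Type*} [MeasurableSpace Ω] {μ : Measure Ω} {C : ℕ} {b : Ω → Fin C → ℝ}

lemma integrable_mul_of_mem_simplex [IsFiniteMeasure μ] (hb : Measurable b)
    (hbs : ∀ ω, b ω ∈ simplex C) (i j : Fin C) :
    Integrable (fun ω => b ω i * b ω j) μ := by
  refine Integrable.of_bound (((measurable_pi_apply i).comp hb).mul
    ((measurable_pi_apply j).comp hb)).aestronglyMeasurable 1 (ae_of_all _ fun ω => ?_)
  rw [Real.norm_eq_abs, abs_mul, abs_of_nonneg ((hbs ω).1 i), abs_of_nonneg ((hbs ω).1 j)]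
  exact mul_le_one₀ (le_one_of_mem_simplex (hbs ω) i) ((hbs ω).1 j)
    (le_one_of_mem_simplex (hbs ω) j)

lemma eq_zero_of_ae_dotProduct_eq_zero (hbs : ∀ ω, b ω ∈ simplex C)
    (hpos : ∀ i : Fin C, ∀ ε > (0 : ℝ), 0 < μ {ω | 1 - ε ≤ b ω i}) {x : Fin C → ℝ}
    (hx : ∀ᵐ ω ∂μ, x ⬝ᵥ b ω = 0) : x = 0 := by
  funext i
  have hclose : ∀ ε > (0 : ℝ), |x i| ≤ 2 * ‖x‖ * ε := by
    intro ε hε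
    obtain ⟨ω, hωi, hω0⟩ : ∃ ω, 1 - ε ≤ b ω i ∧ x ⬝ᵥ b ω = 0 := by
      by_contra! h
      exact (hpos i ε hε).ne' (measure_mono_null h (ae_iff.1 hx))
    have hnear := abs_dotProduct_sub_le (hbs ω).1 (hbs ω).2 x i
    rw [hω0, zero_sub, abs_neg] at hnear
    exact hnear.trans (by gcongr; linarith)
  have hlim : Tendsto (fun ε => 2 * ‖x‖ * ε) (𝓝[>] 0) (𝓝 0) := by
    simpa using ((continuous_const_mul (2 * ‖x‖)).tendsto 0).mono_left nhdsWithin_le_nhds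
  exact abs_nonpos_iff.1 (ge_of_tendsto hlim (eventually_nhdsWithin_of_forall hclose))

end RandomSimplexVector

theorem stmt2_general {Ωs : Type*} [MeasurableSpace Ωs] (μ : Measure Ωs) [IsProbabilityMeasure μ]
    {C : ℕ}
    (b : Ωs → Fin C → ℝ) (hb_meas : Measurable b)
    (hb_simplex : ∀ ω, b ω ∈ simplex C)
    (hpos : ∀ i : Fin C, ∀ ε > (0 : ℝ), 0 < μ {ω | 1 - ε ≤ b ω i}) :
    (Matrix.of fun i i' : Fin C => ∫ ω, b ω i * b ω i' ∂μ).PosDef :=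
  posDef_secondMoment (integrable_mul_of_mem_simplex hb_meas hb_simplex)
    fun _ hx => eq_zero_of_ae_dotProduct_eq_zero hb_simplex hpos hx

/-- if b is a Δ_C-valued random vector with P(b_i ≥ 1−ε) > 0 for every i and
ε > 0, then E[b b'] is symmetric positive definite. -/
theorem stmt2 {Ωs : Type*} [MeasurableSpace Ωs] (μ : Measure Ωs) [IsProbabilityMeasure μ]
    {C : ℕ} (hC : 2 ≤ C)
    (b : Ωs → Fin C → ℝ) (hb_meas : Measurable b)
    (hb_simplex : ∀ ω, b ω ∈ simplex C)
    (hpos : ∀ i : Fin C, ∀ ε > (0 : ℝ), 0 < μ {ω | 1 - ε ≤ b ω i}) :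
    (Matrix.of fun i i' : Fin C => ∫ ω, b ω i * b ω i' ∂μ).PosDef :=
  stmt2_general μ b hb_meas hb_simplex hpos

end GBQL
end
end

section
/- Let (a_r, b_r) ∈ Δ_C × Δ_C for r = 1, …, n be such that for every j ∈ {1,…,C} the C×C matrix Σ_{r=1}^n a_{rj} b_r b_r' is symmetric positive definite. Then the function M̃ ↦ Σ_{r=1}^n D_KL(a_r ‖ M'b_r) is strictly convex on the convex open set U of C×(C−1) matrices M̃ whose completion M (with M_{iC} = 1 − Σ_{j<C} M_{ij}) has all entries strictly positive. -/
open MeasureTheory ProbabilityTheory Filter Finset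
open scoped ENNReal NNReal BigOperators

noncomputable section

namespace GBQL

/-!
Along a segment `t • x + s • y` the completed matrix, hence every vector `M'b_r`, moves affinely,
and `q ↦ p log (p / q)` is convex on `q > 0`, strictly so when `p > 0`. So the loss is convex,
and strictly convex on the segment unless `(M'b_r)_j` takes the same value at both ends whenever
`a_{rj} > 0`. In that case the difference `v` of the `j`-th columns of the completions satisfies
`Σ_r a_{rj} (b_r ⬝ v)² = 0`, the quadratic form of `Σ_r a_{rj} b_r b_r'` at `v`; positive
definiteness forces `v = 0` for every `j`, i.e. `x = y`.
-/

lemma completeM_add_smul {c : ℕ} {t s : ℝ} (hts : t + s = 1) (x y : Fin (c+1) → Fin c → ℝ) :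
    completeM (t • x + s • y) = t • completeM x + s • completeM y := by
  ext i j
  simp only [completeM, Pi.add_apply, Pi.smul_apply, smul_eq_mul]
  split_ifs
  · rfl
  · rw [Finset.sum_add_distrib, ← Finset.mul_sum, ← Finset.mul_sum]
    linear_combination -hts

lemma truncM_completeM {c : ℕ} (Mt : Fin (c+1) → Fin c → ℝ) : truncM (completeM Mt) = Mt := by
  ext i j
  simp [truncM, completeM]

lemma convex_setOf_completeM_pos (c : ℕ) :
    Convex ℝ {Mt : Fin (c+1) → Fin c → ℝ | ∀ i j, 0 < completeM Mt i j} := by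
  intro x hx y hy t s ht hs hts i j
  show 0 < _
  rw [completeM_add_smul hts]
  exact convex_Ioi (0 : ℝ) (hx i j) (hy i j) ht hs hts

section mtv

variable {C : ℕ}

lemma mtv_add (M N : Fin C → Fin C → ℝ) (v : Fin C → ℝ) : mtv (M + N) v = mtv M v + mtv N v := by
  ext j
  simp [mtv, add_mul, Finset.sum_add_distrib]

lemma mtv_smul (t : ℝ) (M : Fin C → Fin C → ℝ) (v : Fin C → ℝ) : mtv (t • M) v = t • mtv M v := by
  ext j
  simp [mtv, Finset.mul_sum, mul_assoc]

lemma mtv_pos {M : Fin C → Fin C → ℝ} (hM : ∀ i j, 0 < M i j) {v : Fin C → ℝ}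
    (hv : v ∈ simplex C) (j : Fin C) : 0 < mtv M v j := by
  obtain ⟨i, hi⟩ : ∃ i, 0 < v i := by
    by_contra! h
    have : ∑ i, v i = 0 := Finset.sum_eq_zero fun i _ => le_antisymm (h i) (hv.1 i)
    simp [hv.2] at this
  exact Finset.sum_pos' (fun i _ => mul_nonneg (hM i j).le (hv.1 i))
    ⟨i, Finset.mem_univ i, mul_pos (hM i j) hi⟩

end mtv

section weightedGram

open Matrix

variable {ι κ : Type*} [Fintype ι] [Fintype κ]

lemma dotProduct_weightedGram_mulVec (w : κ → ℝ) (b : κ → ι → ℝ) (v : ι → ℝ) :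
    v ⬝ᵥ ((Matrix.of fun i i' => ∑ r, w r * b r i * b r i') *ᵥ v)
      = ∑ r, w r * (b r ⬝ᵥ v) ^ 2 := by
  simp only [dotProduct, mulVec, Matrix.of_apply, sq, Finset.mul_sum, Finset.sum_mul]
  conv_rhs => rw [Finset.sum_comm]
  refine Finset.sum_congr rfl fun i _ => ?_
  rw [Finset.sum_comm]
  exact Finset.sum_congr rfl fun i' _ => Finset.sum_congr rfl fun r _ => by ring

lemma eq_zero_of_posDef_weightedGram {w : κ → ℝ} {b : κ → ι → ℝ}
    (hA : (Matrix.of fun i i' => ∑ r, w r * b r i * b r i').PosDef) {v : ι → ℝ}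
    (hv : ∀ r, w r * (b r ⬝ᵥ v) = 0) : v = 0 := by
  by_contra hv0
  have hpos := hA.dotProduct_mulVec_pos hv0
  rw [star_trivial, dotProduct_weightedGram_mulVec] at hpos
  simp [sq, ← mul_assoc, hv] at hpos

end weightedGram

lemma exists_ne_mtv_completeM {c n : ℕ} {a b : Fin n → Fin (c+1) → ℝ}
    (hpd : ∀ j : Fin (c+1),
      (Matrix.of fun i i' : Fin (c+1) => ∑ r, a r j * b r i * b r i').PosDef)
    {x y : Fin (c+1) → Fin c → ℝ} (hxy : x ≠ y) :
    ∃ r j, a r j ≠ 0 ∧ mtv (completeM x) (b r) j ≠ mtv (completeM y) (b r) j := by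
  by_contra! h
  refine hxy ?_
  rw [← truncM_completeM x, ← truncM_completeM y]
  congr 1
  ext i j
  have hcol := eq_zero_of_posDef_weightedGram (hpd j)
    (v := fun i => completeM x i j - completeM y i j) fun r => by
      by_cases har : a r j = 0
      · simp [har]
      · have hdot : b r ⬝ᵥ (fun i => completeM x i j - completeM y i j)
            = mtv (completeM x) (b r) j - mtv (completeM y) (b r) j := by
          simp only [dotProduct, mtv, ← Finset.sum_sub_distrib]
          exact Finset.sum_congr rfl fun i _ => by ring
        rw [hdot, h r j har, sub_self, mul_zero]
  exact sub_eq_zero.mp (congrFun hcol i)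

def klTerm (p q : ℝ) : ℝ := if p = 0 then 0 else p * Real.log (p / q)

lemma strictConvexOn_klTerm {p : ℝ} (hp : 0 < p) : StrictConvexOn ℝ (Set.Ioi 0) (klTerm p) := by
  refine ⟨convex_Ioi 0, fun u hu v hv huv t s ht hs hts => ?_⟩
  have hlog := strictConcaveOn_log_Ioi.2 hu hv huv ht hs hts
  have hw : 0 < t • u + s • v := convex_Ioi 0 hu hv ht.le hs.le hts
  simp only [Set.mem_Ioi, smul_eq_mul] at hlog hw hu hv ⊢
  simp only [klTerm, if_neg hp.ne', Real.log_div hp.ne' hw.ne', Real.log_div hp.ne' hu.ne',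
    Real.log_div hp.ne' hv.ne']
  linear_combination mul_lt_mul_of_pos_left hlog hp - (p * Real.log p) * hts

lemma convexOn_klTerm {p : ℝ} (hp : 0 ≤ p) : ConvexOn ℝ (Set.Ioi 0) (klTerm p) := by
  rcases hp.eq_or_lt with rfl | hp
  · exact (convexOn_const 0 (convex_Ioi 0)).congr fun q _ => (if_pos rfl).symm
  · exact (strictConvexOn_klTerm hp).convexOn

section klReal

variable {C : ℕ} {p u v : Fin C → ℝ} {t s : ℝ}

lemma klReal_add_smul_le (hp : ∀ j, 0 ≤ p j) (hu : ∀ j, 0 < u j) (hv : ∀ j, 0 < v j)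
    (ht : 0 ≤ t) (hs : 0 ≤ s) (hts : t + s = 1) :
    klReal p (t • u + s • v) ≤ t * klReal p u + s * klReal p v := by
  simp only [klReal, Finset.mul_sum, ← Finset.sum_add_distrib]
  exact Finset.sum_le_sum fun j _ => (convexOn_klTerm (hp j)).2 (hu j) (hv j) ht hs hts

lemma klReal_add_smul_lt (hp : ∀ j, 0 ≤ p j) (hu : ∀ j, 0 < u j) (hv : ∀ j, 0 < v j)
    (hne : ∃ j, p j ≠ 0 ∧ u j ≠ v j) (ht : 0 < t) (hs : 0 < s) (hts : t + s = 1) :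
    klReal p (t • u + s • v) < t * klReal p u + s * klReal p v := by
  obtain ⟨j, hpj, huv⟩ := hne
  simp only [klReal, Finset.mul_sum, ← Finset.sum_add_distrib]
  refine Finset.sum_lt_sum
    (fun i _ => (convexOn_klTerm (hp i)).2 (hu i) (hv i) ht.le hs.le hts) ⟨j, Finset.mem_univ j, ?_⟩
  exact (strictConvexOn_klTerm (lt_of_le_of_ne (hp j) (Ne.symm hpj))).2 (hu j) (hv j) huv ht hs hts

end klReal

theorem stmt7_general (c : ℕ) (n : ℕ)
    (a b : Fin n → Fin (c+1) → ℝ)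
    (ha : ∀ r, a r ∈ simplex (c+1)) (hb : ∀ r, b r ∈ simplex (c+1))
    (hpd : ∀ j : Fin (c+1),
      (Matrix.of fun i i' : Fin (c+1) => ∑ r, a r j * b r i * b r i').PosDef) :
    StrictConvexOn ℝ {Mt : Fin (c+1) → Fin c → ℝ | ∀ i j, 0 < completeM Mt i j}
      (fun Mt => ∑ r, klReal (a r) (mtv (completeM Mt) (b r))) := by
  refine ⟨convex_setOf_completeM_pos c, fun x hx y hy hxy t s ht hs hts => ?_⟩
  obtain ⟨r₀, j₀, ha₀, hne⟩ := exists_ne_mtv_completeM hpd hxy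
  have hpos : ∀ {M : Fin (c+1) → Fin c → ℝ}, (∀ i j, 0 < completeM M i j) →
      ∀ r j, 0 < mtv (completeM M) (b r) j := fun hM r => mtv_pos hM (hb r)
  simp only [completeM_add_smul hts, mtv_add, mtv_smul, smul_eq_mul, Finset.mul_sum,
    ← Finset.sum_add_distrib]
  exact Finset.sum_lt_sum
    (fun r _ => klReal_add_smul_le (ha r).1 (hpos hx r) (hpos hy r) ht.le hs.le hts)
    ⟨r₀, Finset.mem_univ r₀,
      klReal_add_smul_lt (ha r₀).1 (hpos hx r₀) (hpos hy r₀) ⟨j₀, ha₀, hne⟩ ht hs hts⟩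

/-- if for every j the matrix Σ_r a_{rj} b_r b_r' is symmetric positive definite,
then M̃ ↦ Σ_r D_KL(a_r ‖ M'b_r) is strictly convex on the open convex set of C×(C−1) matrices
whose completion has strictly positive entries. -/
theorem stmt7 (c : ℕ) (hc : 1 ≤ c) (n : ℕ)
    (a b : Fin n → Fin (c+1) → ℝ)
    (ha : ∀ r, a r ∈ simplex (c+1)) (hb : ∀ r, b r ∈ simplex (c+1))
    (hpd : ∀ j : Fin (c+1),
      (Matrix.of fun i i' : Fin (c+1) => ∑ r, a r j * b r i * b r i').PosDef) :
    StrictConvexOn ℝ {Mt : Fin (c+1) → Fin c → ℝ | ∀ i j, 0 < completeM Mt i j}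
      (fun Mt => ∑ r, klReal (a r) (mtv (completeM Mt) (b r))) :=
  stmt7_general c n a b ha hb hpd

end GBQL
end
end

section
/- Let a^U, a^L, b be Δ_C-valued random vectors with E[a^U] = (M^0)'p^0 and E[a^L | b] = (M^0)'b almost surely, where M^0 is a nonsingular row-stochastic C×C matrix with all entries strictly positive (Assumption 2) and p^0 ∈ Δ_C has all entries strictly positive, and suppose that for every i ∈ {1,…,C} and every ε > 0, P(b_i ≥ 1 − ε) > 0 (Assumption 1). Fix ξ > 0 and define the population loss f(M, p) = E[D_KL(a^U ‖ M'p)] + ξ·E[D_KL(a^L ‖ M'b)] for row-stochastic C×C matrices M and p ∈ Δ_C. Then (M^0, p^0) is the unique global minimizer of f: for every row-stochastic M and p ∈ Δ_C with (M, p) ≠ (M^0, p^0), f(M, p) > f(M^0, p^0), as elements of [0,∞]. -/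
/-!
Write `H(p) = -∑ pⱼ log pⱼ` for the entropy and `H(p, q) = -∑ pⱼ log qⱼ ∈ [0, ∞]` for the cross
entropy, so that `D(p‖q) + H(p) = H(p, q)`. The cross entropy is linear in `p`, so if `q` is
measurable for a σ-algebra `m` and `q₀ = E[a | m]`, then `E[H(a, q)] = E[H(q₀, q)]`; subtracting
the finite quantity `E[H(a)]` gives the chain rule `E[D(a‖q)] = E[D(a‖q₀)] + E[D(q₀‖q)]` in
`[0, ∞]`, with no integrability assumptions. With the trivial σ-algebra for `a^U` and `σ(b)` for
`a^L` this yields `f(M, p) = f(M⁰, p⁰) + D(M⁰'p⁰‖M'p) + ξ E[D(M⁰'b‖M'b)]`, and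
`f(M⁰, p⁰) ≤ E[H(M⁰'p⁰)] + ξ E[H(M⁰'b)]` is finite. If `M ≠ M⁰`, say in row `i`, then `M'b` and
`M⁰'b` differ whenever `b` is close enough to the vertex `eᵢ`, which happens with positive
probability by Assumption 1; if `M = M⁰`, then `p ≠ p⁰` and `M⁰'p ≠ M⁰'p⁰` since `M⁰` is
nonsingular. Either way the excess is positive.
-/

open MeasureTheory ProbabilityTheory Filter Finset
open scoped ENNReal NNReal BigOperators

noncomputable section

namespace GBQL

section Divergence

variable {C : ℕ}

lemma simplex_le_one {p : Fin C → ℝ} (hp : p ∈ simplex C) (j : Fin C) : p j ≤ 1 :=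
  hp.2 ▸ Finset.single_le_sum (fun i _ => hp.1 i) (Finset.mem_univ j)

lemma sum_sub_eq_zero_of_mem_simplex {p q : Fin C → ℝ} (hp : p ∈ simplex C) (hq : q ∈ simplex C) :
    ∑ j, (p j - q j) = 0 := by
  rw [Finset.sum_sub_distrib, hp.2, hq.2, sub_self]

lemma klReal_eq_sum_mul_log (p q : Fin C → ℝ) :
    klReal p q = ∑ j, p j * Real.log (p j / q j) :=
  Finset.sum_congr rfl fun j _ => by split_ifs with h <;> simp [h]

lemma sub_le_mul_log_div {a b : ℝ} (ha : 0 ≤ a) (hb : 0 ≤ b) (hab : 0 < a → 0 < b) :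
    a - b ≤ a * Real.log (a / b) := by
  rcases hb.eq_or_lt with rfl | hb
  · simp [le_antisymm (not_lt.1 fun h => (hab h).false) ha]
  · have := Real.self_sub_one_le_mul_log (div_nonneg ha hb.le)
    calc a - b = b * (a / b - 1) := by field_simp
      _ ≤ b * (a / b * Real.log (a / b)) := by gcongr
      _ = a * Real.log (a / b) := by field_simp

lemma sub_lt_mul_log_div {a b : ℝ} (ha : 0 ≤ a) (hb : 0 ≤ b) (hab : 0 < a → 0 < b)
    (hne : a ≠ b) : a - b < a * Real.log (a / b) := by
  rcases hb.eq_or_lt with rfl | hb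
  · exact absurd (le_antisymm (not_lt.1 fun h => (hab h).false) ha) hne
  · have := Real.self_sub_one_lt_mul_log (div_nonneg ha hb.le)
      (by rwa [ne_eq, div_eq_one_iff_eq hb.ne'])
    calc a - b = b * (a / b - 1) := by field_simp
      _ < b * (a / b * Real.log (a / b)) := by gcongr
      _ = a * Real.log (a / b) := by field_simp

lemma klReal_nonneg {p q : Fin C → ℝ} (hp : p ∈ simplex C) (hq : q ∈ simplex C)
    (hpq : ∀ j, 0 < p j → 0 < q j) : 0 ≤ klReal p q := by
  rw [klReal_eq_sum_mul_log, ← sum_sub_eq_zero_of_mem_simplex hp hq]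
  exact Finset.sum_le_sum fun j _ => sub_le_mul_log_div (hp.1 j) (hq.1 j) (hpq j)

lemma klReal_pos {p q : Fin C → ℝ} (hp : p ∈ simplex C) (hq : q ∈ simplex C)
    (hpq : ∀ j, 0 < p j → 0 < q j) (hne : p ≠ q) : 0 < klReal p q := by
  obtain ⟨j, hj⟩ := Function.ne_iff.1 hne
  rw [klReal_eq_sum_mul_log, ← sum_sub_eq_zero_of_mem_simplex hp hq]
  exact Finset.sum_lt_sum (fun j _ => sub_le_mul_log_div (hp.1 j) (hq.1 j) (hpq j))
    ⟨j, Finset.mem_univ j, sub_lt_mul_log_div (hp.1 j) (hq.1 j) (hpq j) hj⟩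

lemma klDiv_eq_ofReal_klReal {p q : Fin C → ℝ} (h : ¬∃ j, 0 < p j ∧ q j = 0) :
    klDiv p q = ENNReal.ofReal (klReal p q) :=
  if_neg h

lemma klDiv_pos {p q : Fin C → ℝ} (hp : p ∈ simplex C) (hq : q ∈ simplex C) (hne : p ≠ q) :
    0 < klDiv p q := by
  by_cases h : ∃ j, 0 < p j ∧ q j = 0
  · simp [klDiv, h]
  · rw [klDiv_eq_ofReal_klReal h]
    exact ENNReal.ofReal_pos.2 <| klReal_pos hp hq
      (fun j hj => (hq.1 j).lt_of_ne' fun hqj => h ⟨j, hj, hqj⟩) hne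

lemma klDiv_self (p : Fin C → ℝ) : klDiv p p = 0 := by
  have : ¬∃ j, 0 < p j ∧ p j = 0 := fun ⟨j, hj, hj'⟩ => hj.ne' hj'
  simp [klDiv, this]

/-- `-log x` as an element of `[0, ∞]` for `x ∈ [0, 1]`, with `-log 0 = ∞`. -/
def negLog (x : ℝ) : ℝ≥0∞ := if x = 0 then ⊤ else ENNReal.ofReal (-Real.log x)

def entropy (p : Fin C → ℝ) : ℝ := ∑ j, Real.negMulLog (p j)

def crossEntropy (p q : Fin C → ℝ) : ℝ≥0∞ := ∑ j, ENNReal.ofReal (p j) * negLog (q j)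

lemma measurable_negLog : Measurable negLog :=
  Measurable.ite (measurableSet_singleton 0) measurable_const
    Real.measurable_log.neg.ennreal_ofReal

lemma continuous_entropy : Continuous (entropy (C := C)) := by
  unfold entropy; fun_prop

lemma entropy_nonneg {p : Fin C → ℝ} (hp : p ∈ simplex C) : 0 ≤ entropy p :=
  Finset.sum_nonneg fun j _ => Real.negMulLog_nonneg (hp.1 j) (simplex_le_one hp j)

lemma entropy_le {p : Fin C → ℝ} (hp : ∀ j, 0 ≤ p j) : entropy p ≤ C := by
  calc entropy p ≤ ∑ _j : Fin C, (1 : ℝ) :=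
        Finset.sum_le_sum fun j _ =>
          (Real.negMulLog_le_one_sub_self (hp j)).trans (by linarith [hp j])
    _ = C := by simp

lemma mul_log_div_add_negMulLog {a b : ℝ} (hab : a ≠ 0 → b ≠ 0) :
    a * Real.log (a / b) + Real.negMulLog a = a * -Real.log b := by
  by_cases ha : a = 0
  · simp [ha]
  · rw [Real.log_div ha (hab ha), Real.negMulLog]; ring

lemma ofReal_mul_neg_log {a b : ℝ} (ha : 0 ≤ a) (hab : a ≠ 0 → b ≠ 0) :
    ENNReal.ofReal (a * -Real.log b) = ENNReal.ofReal a * negLog b := by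
  by_cases ha0 : a = 0
  · simp [ha0]
  · rw [negLog, if_neg (hab ha0), ENNReal.ofReal_mul ha]

lemma klDiv_add_entropy {p q : Fin C → ℝ} (hp : p ∈ simplex C) (hq : q ∈ simplex C) :
    klDiv p q + ENNReal.ofReal (entropy p) = crossEntropy p q := by
  by_cases h : ∃ j, 0 < p j ∧ q j = 0
  · obtain ⟨j, hpj, hqj⟩ := h
    have : crossEntropy p q = ⊤ := top_unique <|
      calc ⊤ = ENNReal.ofReal (p j) * negLog (q j) := by simp [negLog, hqj, hpj]
        _ ≤ crossEntropy p q :=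
          Finset.single_le_sum (f := fun j => ENNReal.ofReal (p j) * negLog (q j))
            (fun _ _ => zero_le) (Finset.mem_univ j)
    rw [klDiv, if_pos ⟨j, hpj, hqj⟩, top_add, this]
  · have hpq : ∀ j, p j ≠ 0 → q j ≠ 0 := fun j hpj hqj =>
      h ⟨j, (hp.1 j).lt_of_ne' hpj, hqj⟩
    have hterm : ∀ j, p j * Real.log (p j / q j) + Real.negMulLog (p j) = p j * -Real.log (q j) :=
      fun j => mul_log_div_add_negMulLog (hpq j)
    have hnonneg : ∀ j, 0 ≤ p j * -Real.log (q j) := fun j =>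
      mul_nonneg (hp.1 j) (neg_nonneg.2 (Real.log_nonpos (hq.1 j) (simplex_le_one hq j)))
    have hpq' : ∀ j, 0 < p j → 0 < q j := fun j hpj => (hq.1 j).lt_of_ne' (hpq j hpj.ne')
    rw [klDiv_eq_ofReal_klReal h,
      ← ENNReal.ofReal_add (klReal_nonneg hp hq hpq') (entropy_nonneg hp),
      klReal_eq_sum_mul_log, entropy, ← Finset.sum_add_distrib]
    simp_rw [hterm]
    rw [ENNReal.ofReal_sum_of_nonneg fun j _ => hnonneg j, crossEntropy]
    exact Finset.sum_congr rfl fun j _ => ofReal_mul_neg_log (hp.1 j) (hpq j)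

end Divergence

section Conditioning

variable {Ω : Type*} {m mΩ : MeasurableSpace Ω} {μ : Measure[mΩ] Ω}

lemma lintegral_mul_eq_of_setLIntegral_eq (hm : m ≤ mΩ) {X Y : Ω → ℝ≥0∞}
    (hX : Measurable[mΩ] X) (hY : Measurable[mΩ] Y)
    (hXY : ∀ s, MeasurableSet[m] s → ∫⁻ ω in s, X ω ∂μ = ∫⁻ ω in s, Y ω ∂μ)
    {g : Ω → ℝ≥0∞} (hg : Measurable[m] g) :
    ∫⁻ ω, g ω * X ω ∂μ = ∫⁻ ω, g ω * Y ω ∂μ := by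
  have htrim : (μ.withDensity X).trim hm = (μ.withDensity Y).trim hm := by
    refine @Measure.ext _ m _ _ fun s hs => ?_
    rw [trim_measurableSet_eq hm hs, trim_measurableSet_eq hm hs, withDensity_apply _ (hm s hs),
      withDensity_apply _ (hm s hs), hXY s hs]
  have hdensity : ∀ Z : Ω → ℝ≥0∞, Measurable[mΩ] Z →
      ∫⁻ ω, g ω * Z ω ∂μ = ∫⁻ ω, g ω ∂(μ.withDensity Z).trim hm := fun Z hZ => by
    rw [lintegral_trim hm hg, lintegral_withDensity_eq_lintegral_mul μ hZ (hg.mono hm le_rfl)]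
    simp_rw [Pi.mul_apply, mul_comm]
  rw [hdensity X hX, hdensity Y hY, htrim]

lemma setLIntegral_ofReal_eq_of_condExp_ae_eq (hm : m ≤ mΩ) [SigmaFinite (μ.trim hm)]
    {f g : Ω → ℝ} (hf : Integrable f μ) (hf0 : 0 ≤ᵐ[μ] f) (hfg : μ[f|m] =ᵐ[μ] g)
    {s : Set Ω} (hs : MeasurableSet[m] s) :
    ∫⁻ ω in s, ENNReal.ofReal (f ω) ∂μ = ∫⁻ ω in s, ENNReal.ofReal (g ω) ∂μ := by
  rw [← setLIntegral_condLExp hm μ _ hs]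
  refine lintegral_congr_ae (ae_restrict_of_ae ?_)
  filter_upwards [condLExp_ofReal m hf hf0, hfg] with ω h₁ h₂
  rw [h₁, h₂]

variable {C : ℕ} [IsFiniteMeasure μ] {a q₀ q : Ω → Fin C → ℝ}

lemma lintegral_crossEntropy_eq_of_condExp (hm : m ≤ mΩ) (ha : Measurable[mΩ] a)
    (hq₀ : Measurable[m] q₀) (hq : Measurable[m] q) (ha_s : ∀ ω, a ω ∈ simplex C)
    (hcond : ∀ j, μ[fun ω => a ω j|m] =ᵐ[μ] fun ω => q₀ ω j) :
    ∫⁻ ω, crossEntropy (a ω) (q ω) ∂μ = ∫⁻ ω, crossEntropy (q₀ ω) (q ω) ∂μ := by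
  have haj : ∀ j, Measurable[mΩ] fun ω => a ω j := fun j => (measurable_pi_apply j).comp ha
  have hq₀j : ∀ j, Measurable[mΩ] fun ω => q₀ ω j := fun j =>
    ((measurable_pi_apply j).comp hq₀).mono hm le_rfl
  have hqj : ∀ j, Measurable[m] fun ω => negLog (q ω j) := fun j =>
    measurable_negLog.comp ((measurable_pi_apply j).comp hq)
  have hterm : ∀ x : Ω → Fin C → ℝ, (∀ j, Measurable[mΩ] fun ω => x ω j) → ∀ j,
      Measurable[mΩ] fun ω => ENNReal.ofReal (x ω j) * negLog (q ω j) := fun x hx j =>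
    (hx j).ennreal_ofReal.mul ((hqj j).mono hm le_rfl)
  simp only [crossEntropy]
  rw [lintegral_finsetSum _ fun j _ => hterm a haj j,
    lintegral_finsetSum _ fun j _ => hterm q₀ hq₀j j]
  refine Finset.sum_congr rfl fun j _ => ?_
  simp_rw [mul_comm (ENNReal.ofReal _)]
  refine lintegral_mul_eq_of_setLIntegral_eq hm (haj j).ennreal_ofReal (hq₀j j).ennreal_ofReal
    (fun s hs => ?_) (hqj j)
  have hint : Integrable (fun ω => a ω j) μ :=
    .of_bound (haj j).aestronglyMeasurable 1 <| ae_of_all _ fun ω => by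
      rw [Real.norm_of_nonneg ((ha_s ω).1 j)]; exact simplex_le_one (ha_s ω) j
  exact setLIntegral_ofReal_eq_of_condExp_ae_eq hm hint (ae_of_all _ fun ω => (ha_s ω).1 j)
    (hcond j) hs

lemma lintegral_klDiv_add_lintegral_entropy (hm : m ≤ mΩ) (ha : Measurable[mΩ] a)
    (hq₀ : Measurable[m] q₀) (hq : Measurable[m] q) (ha_s : ∀ ω, a ω ∈ simplex C)
    (hq₀_s : ∀ ω, q₀ ω ∈ simplex C) (hq_s : ∀ ω, q ω ∈ simplex C)
    (hcond : ∀ j, μ[fun ω => a ω j|m] =ᵐ[μ] fun ω => q₀ ω j) :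
    ∫⁻ ω, klDiv (a ω) (q ω) ∂μ + ∫⁻ ω, ENNReal.ofReal (entropy (a ω)) ∂μ =
      ∫⁻ ω, klDiv (q₀ ω) (q ω) ∂μ + ∫⁻ ω, ENNReal.ofReal (entropy (q₀ ω)) ∂μ := by
  have hent : ∀ x : Ω → Fin C → ℝ, Measurable[mΩ] x →
      Measurable[mΩ] fun ω => ENNReal.ofReal (entropy (x ω)) := fun x hx =>
    (continuous_entropy.measurable.comp hx).ennreal_ofReal
  rw [← lintegral_add_right _ (hent a ha), ← lintegral_add_right _ (hent q₀ (hq₀.mono hm le_rfl))]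
  calc ∫⁻ ω, klDiv (a ω) (q ω) + ENNReal.ofReal (entropy (a ω)) ∂μ
      = ∫⁻ ω, crossEntropy (a ω) (q ω) ∂μ :=
        lintegral_congr fun ω => klDiv_add_entropy (ha_s ω) (hq_s ω)
    _ = ∫⁻ ω, crossEntropy (q₀ ω) (q ω) ∂μ :=
        lintegral_crossEntropy_eq_of_condExp hm ha hq₀ hq ha_s hcond
    _ = ∫⁻ ω, klDiv (q₀ ω) (q ω) + ENNReal.ofReal (entropy (q₀ ω)) ∂μ :=
        (lintegral_congr fun ω => klDiv_add_entropy (hq₀_s ω) (hq_s ω)).symm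

lemma lintegral_entropy_ne_top {x : Ω → Fin C → ℝ} (hx : ∀ ω, x ω ∈ simplex C) :
    ∫⁻ ω, ENNReal.ofReal (entropy (x ω)) ∂μ ≠ ⊤ := by
  refine ne_top_of_le_ne_top (b := ENNReal.ofReal C * μ Set.univ)
    (ENNReal.mul_ne_top ENNReal.ofReal_ne_top (measure_ne_top μ _)) ?_
  calc ∫⁻ ω, ENNReal.ofReal (entropy (x ω)) ∂μ ≤ ∫⁻ _, ENNReal.ofReal C ∂μ :=
        lintegral_mono fun ω => ENNReal.ofReal_le_ofReal (entropy_le (hx ω).1)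
    _ = ENNReal.ofReal C * μ Set.univ := lintegral_const _

lemma lintegral_klDiv_ne_top_of_condExp (hm : m ≤ mΩ) (ha : Measurable[mΩ] a)
    (hq₀ : Measurable[m] q₀) (ha_s : ∀ ω, a ω ∈ simplex C) (hq₀_s : ∀ ω, q₀ ω ∈ simplex C)
    (hcond : ∀ j, μ[fun ω => a ω j|m] =ᵐ[μ] fun ω => q₀ ω j) :
    ∫⁻ ω, klDiv (a ω) (q₀ ω) ∂μ ≠ ⊤ := by
  have h := lintegral_klDiv_add_lintegral_entropy hm ha hq₀ hq₀ ha_s hq₀_s hq₀_s hcond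
  simp only [klDiv_self, lintegral_zero, zero_add] at h
  exact ne_top_of_le_ne_top (lintegral_entropy_ne_top hq₀_s) (h ▸ le_self_add)

lemma lintegral_klDiv_eq_add_of_condExp (hm : m ≤ mΩ) (ha : Measurable[mΩ] a)
    (hq₀ : Measurable[m] q₀) (hq : Measurable[m] q) (ha_s : ∀ ω, a ω ∈ simplex C)
    (hq₀_s : ∀ ω, q₀ ω ∈ simplex C) (hq_s : ∀ ω, q ω ∈ simplex C)
    (hcond : ∀ j, μ[fun ω => a ω j|m] =ᵐ[μ] fun ω => q₀ ω j) :
    ∫⁻ ω, klDiv (a ω) (q ω) ∂μ = ∫⁻ ω, klDiv (a ω) (q₀ ω) ∂μ + ∫⁻ ω, klDiv (q₀ ω) (q ω) ∂μ := by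
  have h := lintegral_klDiv_add_lintegral_entropy hm ha hq₀ hq ha_s hq₀_s hq_s hcond
  have h₀ := lintegral_klDiv_add_lintegral_entropy hm ha hq₀ hq₀ ha_s hq₀_s hq₀_s hcond
  simp only [klDiv_self, lintegral_zero, zero_add] at h₀
  refine (ENNReal.add_left_inj (lintegral_entropy_ne_top (μ := μ) ha_s)).1 ?_
  rw [h, ← h₀]
  ring

end Conditioning

section Mixing

variable {C : ℕ}

lemma rowStochastic_le_one {M : Fin C → Fin C → ℝ} (hM : rowStochastic M) (i j : Fin C) :
    M i j ≤ 1 :=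
  hM.2 i ▸ Finset.single_le_sum (fun k _ => hM.1 i k) (Finset.mem_univ j)

lemma mtv_mem_simplex {M : Fin C → Fin C → ℝ} (hM : rowStochastic M) {x : Fin C → ℝ}
    (hx : x ∈ simplex C) : mtv M x ∈ simplex C := by
  refine ⟨fun j => Finset.sum_nonneg fun i _ => mul_nonneg (hM.1 i j) (hx.1 i), ?_⟩
  simp only [mtv]
  rw [Finset.sum_comm]
  simp [← Finset.sum_mul, hM.2, hx.2]

lemma measurable_mtv (M : Fin C → Fin C → ℝ) : Measurable (mtv M) := by
  unfold mtv; fun_prop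

lemma mtv_injective {M : Fin C → Fin C → ℝ} (hdet : (Matrix.of M).det ≠ 0) :
    Function.Injective (mtv M) := by
  have hvec : mtv M = fun x => Matrix.vecMul x (Matrix.of M) := by
    ext x j; simp [mtv, Matrix.vecMul, dotProduct, mul_comm]
  rw [hvec]
  exact Matrix.vecMul_injective_iff_isUnit.2 ((Matrix.isUnit_iff_isUnit_det _).2 hdet.isUnit)

lemma abs_mtv_sub_le {M : Fin C → Fin C → ℝ} (hM : rowStochastic M) {x : Fin C → ℝ}
    (hx : x ∈ simplex C) (i j : Fin C) : |mtv M x j - M i j| ≤ 1 - x i := by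
  have hrow : ∀ k, |M k j - M i j| ≤ 1 := fun k => abs_sub_le_iff.2
    ⟨by linarith [rowStochastic_le_one hM k j, hM.1 i j],
      by linarith [rowStochastic_le_one hM i j, hM.1 k j]⟩
  have hsum : mtv M x j - M i j = ∑ k ∈ Finset.univ.erase i, (M k j - M i j) * x k := by
    rw [Finset.sum_erase _ (by simp)]
    simp only [mtv, sub_mul, Finset.sum_sub_distrib, ← Finset.mul_sum, hx.2, mul_one]
  calc |mtv M x j - M i j| ≤ ∑ k ∈ Finset.univ.erase i, |(M k j - M i j) * x k| :=
        hsum ▸ Finset.abs_sum_le_sum_abs _ _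
    _ ≤ ∑ k ∈ Finset.univ.erase i, x k := Finset.sum_le_sum fun k _ => by
        rw [abs_mul, abs_of_nonneg (hx.1 k)]
        exact mul_le_of_le_one_left (hx.1 k) (hrow k)
    _ = 1 - x i := by rw [Finset.sum_erase_eq_sub (Finset.mem_univ i), hx.2]

lemma mtv_ne_of_two_mul_lt {M M₀ : Fin C → Fin C → ℝ} (hM : rowStochastic M)
    (hM₀ : rowStochastic M₀) {x : Fin C → ℝ} (hx : x ∈ simplex C) {i j : Fin C}
    (h : 2 * (1 - x i) < |M i j - M₀ i j|) : mtv M x ≠ mtv M₀ x := fun heq => by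
  have h₁ := abs_mtv_sub_le hM hx i j
  have h₂ := abs_mtv_sub_le hM₀ hx i j
  rw [heq, abs_sub_comm] at h₁
  linarith [abs_sub_le (M i j) (mtv M₀ x j) (M₀ i j)]

lemma measurable_klDiv {Ω : Type*} [MeasurableSpace Ω] {f g : Ω → Fin C → ℝ}
    (hf : Measurable f) (hg : Measurable g) : Measurable fun ω => klDiv (f ω) (g ω) := by
  unfold klDiv
  refine Measurable.ite ?_ measurable_const ?_
  · simp only [Set.ofPred_exists]
    exact MeasurableSet.iUnion fun j =>
      (measurableSet_lt measurable_const ((measurable_pi_apply j).comp hf)).inter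
        (measurableSet_eq_fun ((measurable_pi_apply j).comp hg) measurable_const)
  · refine (Finset.measurable_sum _ fun j _ => Measurable.ite ?_ measurable_const ?_).ennreal_ofReal
    · exact measurableSet_eq_fun ((measurable_pi_apply j).comp hf) measurable_const
    · have hfj := (measurable_pi_apply j).comp hf
      exact hfj.mul (Real.measurable_log.comp (hfj.div ((measurable_pi_apply j).comp hg)))

lemma lintegral_klDiv_mtv_pos {Ω : Type*} [MeasurableSpace Ω] {μ : Measure Ω}
    {b : Ω → Fin C → ℝ} (hb : Measurable b) (hb_s : ∀ ω, b ω ∈ simplex C)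
    (hvert : ∀ i : Fin C, ∀ ε > (0 : ℝ), 0 < μ {ω | 1 - ε ≤ b ω i})
    {M M₀ : Fin C → Fin C → ℝ} (hM : rowStochastic M) (hM₀ : rowStochastic M₀)
    (hne : M ≠ M₀) : 0 < ∫⁻ ω, klDiv (mtv M₀ (b ω)) (mtv M (b ω)) ∂μ := by
  obtain ⟨i, j, hij⟩ : ∃ i j, M i j ≠ M₀ i j := by
    by_contra! h
    exact hne (funext₂ h)
  have hd : 0 < |M i j - M₀ i j| := abs_pos.2 (sub_ne_zero.2 hij)
  have hmeas : Measurable fun ω => klDiv (mtv M₀ (b ω)) (mtv M (b ω)) :=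
    measurable_klDiv ((measurable_mtv M₀).comp hb) ((measurable_mtv M).comp hb)
  rw [lintegral_pos_iff_support hmeas]
  refine (hvert i (|M i j - M₀ i j| / 4) (by positivity)).trans_le (measure_mono fun ω hω => ?_)
  have hsep : mtv M (b ω) ≠ mtv M₀ (b ω) :=
    mtv_ne_of_two_mul_lt hM hM₀ (hb_s ω) (by simp only [Set.mem_ofPred_eq] at hω; linarith)
  exact (klDiv_pos (mtv_mem_simplex hM₀ (hb_s ω)) (mtv_mem_simplex hM (hb_s ω)) hsep.symm).ne'

end Mixing

theorem stmt8_general {Ωs : Type*} [MeasurableSpace Ωs] (μ : Measure Ωs) [IsProbabilityMeasure μ]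
    {C : ℕ}
    (aU aL b : Ωs → Fin C → ℝ)
    (haU_meas : Measurable aU) (haL_meas : Measurable aL) (hb_meas : Measurable b)
    (haU_simplex : ∀ ω, aU ω ∈ simplex C) (haL_simplex : ∀ ω, aL ω ∈ simplex C)
    (hb_simplex : ∀ ω, b ω ∈ simplex C)
    (M0 : Fin C → Fin C → ℝ) (hM0 : rowStochastic M0)
    (hM0det : (Matrix.of M0).det ≠ 0)
    (p0 : Fin C → ℝ) (hp0 : p0 ∈ simplex C)
    (hmeanU : ∀ j, ∫ ω, aU ω j ∂μ = mtv M0 p0 j)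
    (hcondL : ∀ j, μ[(fun ω => aL ω j) | MeasurableSpace.comap b inferInstance]
      =ᵐ[μ] fun ω => mtv M0 (b ω) j)
    (hpos : ∀ i : Fin C, ∀ ε > (0 : ℝ), 0 < μ {ω | 1 - ε ≤ b ω i})
    (ξ : ℝ) (hξ : 0 < ξ)
    (M : Fin C → Fin C → ℝ) (hM : rowStochastic M)
    (p : Fin C → ℝ) (hp : p ∈ simplex C) (hne : (M, p) ≠ (M0, p0)) :
    (∫⁻ ω, klDiv (aU ω) (mtv M0 p0) ∂μ) +
        ENNReal.ofReal ξ * ∫⁻ ω, klDiv (aL ω) (mtv M0 (b ω)) ∂μ <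
      (∫⁻ ω, klDiv (aU ω) (mtv M p) ∂μ) +
        ENNReal.ofReal ξ * ∫⁻ ω, klDiv (aL ω) (mtv M (b ω)) ∂μ := by
  have hq0U := mtv_mem_simplex hM0 hp0
  have hq0L : ∀ ω, mtv M0 (b ω) ∈ simplex C := fun ω => mtv_mem_simplex hM0 (hb_simplex ω)
  have hqL : ∀ ω, mtv M (b ω) ∈ simplex C := fun ω => mtv_mem_simplex hM (hb_simplex ω)
  have hcondU : ∀ j, μ[fun ω => aU ω j|⊥] =ᵐ[μ] fun _ => mtv M0 p0 j := fun j => by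
    rw [condExp_bot, hmeanU j]
  have hbm : ∀ N, Measurable[MeasurableSpace.comap b inferInstance] fun ω => mtv N (b ω) :=
    fun N => (measurable_mtv N).comp (comap_measurable b)
  have hU := lintegral_klDiv_eq_add_of_condExp bot_le haU_meas measurable_const measurable_const
    haU_simplex (fun _ => hq0U) (fun _ => mtv_mem_simplex hM hp) hcondU
  have hL := lintegral_klDiv_eq_add_of_condExp hb_meas.comap_le haL_meas
    (hbm M0) (hbm M) haL_simplex hq0L hqL hcondL
  have hfin : (∫⁻ ω, klDiv (aU ω) (mtv M0 p0) ∂μ) +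
      ENNReal.ofReal ξ * ∫⁻ ω, klDiv (aL ω) (mtv M0 (b ω)) ∂μ ≠ ⊤ :=
    ENNReal.add_ne_top.2 ⟨lintegral_klDiv_ne_top_of_condExp bot_le haU_meas measurable_const
      haU_simplex (fun _ => hq0U) hcondU, ENNReal.mul_ne_top ENNReal.ofReal_ne_top
      (lintegral_klDiv_ne_top_of_condExp hb_meas.comap_le haL_meas
        (hbm M0) haL_simplex hq0L hcondL)⟩
  have hgain : klDiv (mtv M0 p0) (mtv M p) +
      ENNReal.ofReal ξ * ∫⁻ ω, klDiv (mtv M0 (b ω)) (mtv M (b ω)) ∂μ ≠ 0 := by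
    rcases eq_or_ne M M0 with rfl | hMM
    · have hpp : p ≠ p0 := fun h => hne (h ▸ rfl)
      exact fun h => (klDiv_pos hq0U (mtv_mem_simplex hM hp)
        fun h => hpp (mtv_injective hM0det h).symm).ne' (add_eq_zero.1 h).1
    · exact fun h => (ENNReal.mul_pos (ENNReal.ofReal_pos.2 hξ).ne'
        (lintegral_klDiv_mtv_pos hb_meas hb_simplex hpos hM hM0 hMM).ne').ne' (add_eq_zero.1 h).2
  rw [hU, hL, lintegral_const, measure_univ, mul_one, mul_add, add_add_add_comm]
  exact ENNReal.lt_add_right hfin hgain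

/-- under E[a^U] = (M⁰)'p⁰, E[a^L|b] = (M⁰)'b a.s., with M⁰ nonsingular,
row-stochastic with strictly positive entries, p⁰ ∈ Δ_C with strictly positive entries, and
Assumption 1 on b, the pair (M⁰, p⁰) is the unique global minimizer of
f(M,p) = E[D_KL(a^U ‖ M'p)] + ξ·E[D_KL(a^L ‖ M'b)]. -/
theorem stmt8 {Ωs : Type*} [MeasurableSpace Ωs] (μ : Measure Ωs) [IsProbabilityMeasure μ]
    {C : ℕ} (hC : 2 ≤ C)
    (aU aL b : Ωs → Fin C → ℝ)
    (haU_meas : Measurable aU) (haL_meas : Measurable aL) (hb_meas : Measurable b)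
    (haU_simplex : ∀ ω, aU ω ∈ simplex C) (haL_simplex : ∀ ω, aL ω ∈ simplex C)
    (hb_simplex : ∀ ω, b ω ∈ simplex C)
    (M0 : Fin C → Fin C → ℝ) (hM0 : rowStochastic M0) (hM0pos : ∀ i j, 0 < M0 i j)
    (hM0det : (Matrix.of M0).det ≠ 0)
    (p0 : Fin C → ℝ) (hp0 : p0 ∈ simplex C) (hp0pos : ∀ i, 0 < p0 i)
    (hmeanU : ∀ j, ∫ ω, aU ω j ∂μ = mtv M0 p0 j)
    (hcondL : ∀ j, μ[(fun ω => aL ω j) | MeasurableSpace.comap b inferInstance]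
      =ᵐ[μ] fun ω => mtv M0 (b ω) j)
    (hpos : ∀ i : Fin C, ∀ ε > (0 : ℝ), 0 < μ {ω | 1 - ε ≤ b ω i})
    (ξ : ℝ) (hξ : 0 < ξ)
    (M : Fin C → Fin C → ℝ) (hM : rowStochastic M)
    (p : Fin C → ℝ) (hp : p ∈ simplex C) (hne : (M, p) ≠ (M0, p0)) :
    (∫⁻ ω, klDiv (aU ω) (mtv M0 p0) ∂μ) +
        ENNReal.ofReal ξ * ∫⁻ ω, klDiv (aL ω) (mtv M0 (b ω)) ∂μ <
      (∫⁻ ω, klDiv (aU ω) (mtv M p) ∂μ) +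
        ENNReal.ofReal ξ * ∫⁻ ω, klDiv (aL ω) (mtv M (b ω)) ∂μ :=
  stmt8_general μ aU aL b haU_meas haL_meas hb_meas haU_simplex haL_simplex hb_simplex M0 hM0 hM0det
    p0 hp0 hmeanU hcondL hpos ξ hξ M hM p hp hne

end GBQL
end
end
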